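/- Let r < 0 and c₁ < 0 (so that c₁r > 0 and c₁/(2r) > 0), and define on the open set V = {v ∈ ℝ : v² < c₁/(2r)} the function G(v) = ln(2rv² − c₁)/(4r) + √2·artanh(√2·r·v/√(c₁r))/(2√(c₁r)). Then for v ∈ V one has 2rv² − c₁ > 0 and |√2·r·v/√(c₁r)| < 1, G is differentiable on V with G'(v) = (v − 1)/(2rv² − c₁), and consequently: if φ : J → ℝ is differentiable on an open interval J with φ(ω) ∈ V and ω − G(φ(ω)) + c₂ = 0 for all ω ∈ J, then φ'(ω)·(φ(ω) − 1) = 2rφ(ω)² − c₁ on J. -/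

import Mathlib

open Real Set

noncomputable section

/-- The inverse hyperbolic tangent, defined for arguments of absolute value less than 1. -/
def artanh (x : ℝ) : ℝ := Real.log ((1 + x) / (1 - x)) / 2

theorem hasDerivAt_artanh {x : ℝ} (hx : |x| < 1) :
    HasDerivAt _root_.artanh (1 / (1 - x ^ 2)) x := by
  obtain ⟨hl, hu⟩ := abs_lt.1 hx
  have hquot : HasDerivAt (fun y : ℝ => (1 + y) / (1 - y))
      ((1 * (1 - x) - (1 + x) * (-1)) / (1 - x) ^ 2) x :=
    ((hasDerivAt_id x).const_add 1).div ((hasDerivAt_id x).const_sub 1) (by linarith)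
  have hpos : 0 < (1 + x) / (1 - x) := div_pos (by linarith) (by linarith)
  refine ((hquot.log hpos.ne').div_const 2).congr_deriv ?_
  have h₁ : 1 + x ≠ 0 := by linarith
  have h₂ : 1 - x ≠ 0 := by linarith
  have h₃ : 1 - x ^ 2 ≠ 0 := by nlinarith
  field_simp
  ring

open Filter Topology

section

variable {r c v : ℝ}

theorem neg_of_lt_two_mul_mul_sq (hr : r < 0) (hv : c < 2 * r * v ^ 2) : c < 0 := by
  nlinarith [sq_nonneg v]

theorem abs_sqrt_two_mul_mul_div_sqrt_lt_one (hr : r < 0) (hv : c < 2 * r * v ^ 2) :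
    |√2 * r * v / √(c * r)| < 1 := by
  have hcr : 0 < c * r := mul_pos_of_neg_of_neg (neg_of_lt_two_mul_mul_sq hr hv) hr
  rw [abs_div, abs_of_pos (sqrt_pos.2 hcr), div_lt_one (sqrt_pos.2 hcr),
    lt_sqrt (abs_nonneg _), sq_abs, mul_pow, mul_pow, sq_sqrt zero_le_two]
  nlinarith

/-- The two terms of `G` are the partial fractions of `(v - 1) / (2 r v² - c)`: the logarithm
accounts for `v` and the `artanh` term for `-1`. -/
theorem hasDerivAt_log_add_artanh (hr : r < 0) (hv : c < 2 * r * v ^ 2) :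
    HasDerivAt (fun w => Real.log (2 * r * w ^ 2 - c) / (4 * r)
        + √2 * _root_.artanh (√2 * r * w / √(c * r)) / (2 * √(c * r)))
      ((v - 1) / (2 * r * v ^ 2 - c)) v := by
  have hc := neg_of_lt_two_mul_mul_sq hr hv
  have hcr : 0 < c * r := mul_pos_of_neg_of_neg hc hr
  have hD : 2 * r * v ^ 2 - c ≠ 0 := (sub_pos.2 hv).ne'
  have hpoly : HasDerivAt (fun w : ℝ => 2 * r * w ^ 2 - c) (2 * r * (2 * v)) v := by
    simpa using ((hasDerivAt_pow 2 v).const_mul (2 * r)).sub_const c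
  have hlin : HasDerivAt (fun w : ℝ => √2 * r * w / √(c * r)) (√2 * r * 1 / √(c * r)) v :=
    ((hasDerivAt_id v).const_mul (√2 * r)).div_const _
  have hsum := ((hpoly.log hD).div_const (4 * r)).add
    ((((hasDerivAt_artanh (abs_sqrt_two_mul_mul_div_sqrt_lt_one hr hv)).comp v hlin).const_mul
      √2).div_const (2 * √(c * r)))
  refine hsum.congr_deriv ?_
  have hone : 1 - (√2 * r * v / √(c * r)) ^ 2 = -(2 * r * v ^ 2 - c) / c := by
    rw [div_pow, mul_pow, mul_pow, sq_sqrt zero_le_two, sq_sqrt hcr.le]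
    field_simp [hc.ne]
    ring
  rw [hone]
  field_simp [hr.ne, hc.ne, (sqrt_pos.2 hcr).ne']
  rw [sq_sqrt zero_le_two, mul_comm r c, sq_sqrt hcr.le]
  field_simp [hr.ne, hc.ne]
  ring

end

theorem HasDerivAt.mul_eq_one_of_comp_eventuallyEq_add_const {𝕜 : Type*}
    [NontriviallyNormedField 𝕜] {G φ : 𝕜 → 𝕜} {g φ' ω c : 𝕜}
    (hG : HasDerivAt G g (φ ω)) (hφ : HasDerivAt φ φ' ω)
    (hrel : ∀ᶠ t in 𝓝 ω, G (φ t) = t + c) : g * φ' = 1 :=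
  (hG.comp ω hφ).unique (((hasDerivAt_id ω).add_const c).congr_of_eventuallyEq hrel)

theorem implicit_solution_formula_30_general
    (r c₁ : ℝ) (hr : r < 0)
    (V : Set ℝ) (hV : V = {v : ℝ | v ^ 2 < c₁ / (2 * r)})
    (G : ℝ → ℝ)
    (hGdef : ∀ v : ℝ, G v =
      Real.log (2 * r * v ^ 2 - c₁) / (4 * r)
        + Real.sqrt 2 * _root_.artanh (Real.sqrt 2 * r * v / Real.sqrt (c₁ * r))
            / (2 * Real.sqrt (c₁ * r))) :
    (∀ v ∈ V, 0 < 2 * r * v ^ 2 - c₁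
      ∧ |Real.sqrt 2 * r * v / Real.sqrt (c₁ * r)| < 1)
    ∧ (∀ v ∈ V, HasDerivAt G ((v - 1) / (2 * r * v ^ 2 - c₁)) v)
    ∧ ∀ (c₂ : ℝ) (J : Set ℝ), IsOpen J → J.OrdConnected →
        ∀ φ φ' : ℝ → ℝ, (∀ ω ∈ J, HasDerivAt φ (φ' ω) ω) →
          (∀ ω ∈ J, φ ω ∈ V) →
          (∀ ω ∈ J, ω - G (φ ω) + c₂ = 0) →
          ∀ ω ∈ J, φ' ω * (φ ω - 1) = 2 * r * (φ ω) ^ 2 - c₁ := by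
  have hmemV : ∀ v ∈ V, c₁ < 2 * r * v ^ 2 := by
    intro v hv
    rw [hV] at hv
    exact (lt_div_iff_of_neg' (by linarith : 2 * r < 0)).1 hv
  have hderiv : ∀ v ∈ V, HasDerivAt G ((v - 1) / (2 * r * v ^ 2 - c₁)) v := by
    intro v hv
    rw [funext hGdef]
    exact hasDerivAt_log_add_artanh hr (hmemV v hv)
  refine ⟨fun v hv => ⟨sub_pos.2 (hmemV v hv),
    abs_sqrt_two_mul_mul_div_sqrt_lt_one hr (hmemV v hv)⟩, hderiv, ?_⟩
  intro c₂ J hJ _ φ φ' hφ hφV hrel ω hω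
  have hinv := (hderiv _ (hφV ω hω)).mul_eq_one_of_comp_eventuallyEq_add_const (hφ ω hω)
    (c := c₂) (eventually_of_mem (hJ.mem_nhds hω) fun t ht => by linarith [hrel t ht])
  have hD : 2 * r * φ ω ^ 2 - c₁ ≠ 0 := (sub_pos.2 (hmemV _ (hφV ω hω))).ne'
  rw [div_mul_eq_mul_div, div_eq_one_iff_eq hD] at hinv
  linarith

/-- formula (30). For `r < 0`, `c₁ < 0`, the function
`G(v) = ln(2rv² − c₁)/(4r) + √2·artanh(√2·r·v/√(c₁r))/(2√(c₁r))` is differentiable on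
`V = {v : v² < c₁/(2r)}` with `G'(v) = (v−1)/(2rv²−c₁)`, and any differentiable `φ` with
values in `V` satisfying `ω − G(φ(ω)) + c₂ = 0` obeys `φ'(φ−1) = 2rφ² − c₁`. -/
theorem implicit_solution_formula_30
    (r c₁ : ℝ) (hr : r < 0) (hc₁ : c₁ < 0)
    (V : Set ℝ) (hV : V = {v : ℝ | v ^ 2 < c₁ / (2 * r)})
    (G : ℝ → ℝ)
    (hGdef : ∀ v : ℝ, G v =
      Real.log (2 * r * v ^ 2 - c₁) / (4 * r)
        + Real.sqrt 2 * _root_.artanh (Real.sqrt 2 * r * v / Real.sqrt (c₁ * r))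
            / (2 * Real.sqrt (c₁ * r))) :
    (∀ v ∈ V, 0 < 2 * r * v ^ 2 - c₁
      ∧ |Real.sqrt 2 * r * v / Real.sqrt (c₁ * r)| < 1)
    ∧ (∀ v ∈ V, HasDerivAt G ((v - 1) / (2 * r * v ^ 2 - c₁)) v)
    ∧ ∀ (c₂ : ℝ) (J : Set ℝ), IsOpen J → J.OrdConnected →
        ∀ φ φ' : ℝ → ℝ, (∀ ω ∈ J, HasDerivAt φ (φ' ω) ω) →
          (∀ ω ∈ J, φ ω ∈ V) →
          (∀ ω ∈ J, ω - G (φ ω) + c₂ = 0) →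
          ∀ ω ∈ J, φ' ω * (φ ω - 1) = 2 * r * (φ ω) ^ 2 - c₁ :=
  implicit_solution_formula_30_general r c₁ hr V hV G hGdef

end
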